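/- Let K be a field, X a finite nonempty alphabet, and S : X* → K a rational series such that the set of values { S(w) : w ∈ X* } is finite. Then S admits a deterministic linear representation (i.e., S is recognized by a deterministic weighted automaton). -/

import Mathlib

/-- Product of the matrices `μ x` along the word `w`. -/
def wordProd {X K : Type*} [Semiring K] {n : ℕ} (μ : X → Matrix (Fin n) (Fin n) K)
    (w : List X) : Matrix (Fin n) (Fin n) K :=
  (w.map μ).prod

/-- `(u, μ, v)` is a linear representation of the series `S : X* → K`. -/
def IsLinRep {X K : Type*} [Semiring K] {n : ℕ} (S : List X → K)
    (u : Fin n → K) (μ : X → Matrix (Fin n) (Fin n) K) (v : Fin n → K) : Prop :=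
  ∀ w : List X, S w = dotProduct u (Matrix.mulVec (wordProd μ w) v)

/-- A series is rational if it admits a linear representation. -/
def IsRational {X K : Type*} [Semiring K] (S : List X → K) : Prop :=
  ∃ (n : ℕ) (u : Fin n → K) (μ : X → Matrix (Fin n) (Fin n) K) (v : Fin n → K),
    IsLinRep S u μ v

/-- `p` is an accepting path for the word `w` in the weighted automaton associated to
`(u, μ, v)`. -/
def IsAcceptingPath {X K : Type*} [Semiring K] {n : ℕ}
    (u : Fin n → K) (μ : X → Matrix (Fin n) (Fin n) K) (v : Fin n → K)
    (w : List X) (p : Fin (w.length + 1) → Fin n) : Prop :=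
  u (p 0) ≠ 0 ∧
  (∀ i : Fin w.length, μ (w.get i) (p i.castSucc) (p i.succ) ≠ 0) ∧
  v (p (Fin.last w.length)) ≠ 0

/-- The linear representation `(u, μ, v)` is unambiguous: every word labels at most one
accepting path. -/
def IsUnambiguous {X K : Type*} [Semiring K] {n : ℕ}
    (u : Fin n → K) (μ : X → Matrix (Fin n) (Fin n) K) (v : Fin n → K) : Prop :=
  ∀ (w : List X) (p q : Fin (w.length + 1) → Fin n),
    IsAcceptingPath u μ v w p → IsAcceptingPath u μ v w q → p = q

/-- `S` is a Pólya series: its nonzero coefficients lie in a finitely generated subgroup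
of `Kˣ`. -/
def IsPolya {X K : Type*} [Field K] (S : List X → K) : Prop :=
  ∃ G : Subgroup Kˣ, G.FG ∧ ∀ w : List X, S w = 0 ∨ ∃ g ∈ G, (g : K) = S w

/-- The linear representation is deterministic: at most one initial state, and every row
of each `μ x` has at most one nonzero entry. -/
def IsDeterministic {X K : Type*} [Semiring K] {n : ℕ}
    (u : Fin n → K) (μ : X → Matrix (Fin n) (Fin n) K) : Prop :=
  (∀ i j : Fin n, u i ≠ 0 → u j ≠ 0 → i = j) ∧
  ∀ (x : X) (p q q' : Fin n), μ x p q ≠ 0 → μ x p q' ≠ 0 → q = q'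

/-- Minimal linear representation: no linear representation of `S` has smaller rank. -/
def IsMinimalRep {X K : Type*} [Semiring K] {n : ℕ} (S : List X → K)
    (u : Fin n → K) (μ : X → Matrix (Fin n) (Fin n) K) (v : Fin n → K) : Prop :=
  IsLinRep S u μ v ∧
  ∀ (m : ℕ) (u' : Fin m → K) (μ' : X → Matrix (Fin m) (Fin m) K) (v' : Fin m → K),
    IsLinRep S u' μ' v' → n ≤ m

/-- The set `Ω = {u · μ(w) : w ∈ X*}` is contained in a finite union of subspaces of
dimension at most 1, i.e. the linear hull has dimension at most 1. -/
def HullDimLE1 {X K : Type*} [Field K] {n : ℕ}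
    (u : Fin n → K) (μ : X → Matrix (Fin n) (Fin n) K) : Prop :=
  ∃ (k : ℕ) (W : Fin k → Submodule K (Fin n → K)),
    (∀ i, Module.finrank K (W i) ≤ 1) ∧
    ∀ w : List X, ∃ i, Matrix.vecMul u (wordProd μ w) ∈ W i

/-!
The left quotients `w⁻¹S : z ↦ S (w z)` of a series are the states of a deterministic automaton
(initial state `S`, transitions `R ↦ x⁻¹R`, output `R ↦ R ε`), so it suffices to show that `S`
has only finitely many left quotients. From a linear representation,
`S (w z) = (u μ(w)) · (μ(z) v)`; the vectors `μ(z) v` span a finitely generated module, already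
spanned by those of finitely many words `z`, so a left quotient is determined by its values at
these words. Those values lie in the finite set of values of `S`.
-/

open Matrix Submodule Set

section LeftQuotient

variable {X K : Type*}

def leftQuotient (S : List X → K) (w : List X) : List X → K := fun z => S (w ++ z)

@[simp]
lemma leftQuotient_apply (S : List X → K) (w z : List X) : leftQuotient S w z = S (w ++ z) := rfl

lemma leftQuotient_leftQuotient (S : List X → K) (w w' : List X) :
    leftQuotient (leftQuotient S w) w' = leftQuotient S (w ++ w') := by
  funext z
  simp [List.append_assoc]

lemma foldl_leftQuotient (S : List X → K) (w : List X) :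
    w.foldl (fun R x => leftQuotient R [x]) S = leftQuotient S w := by
  induction w generalizing S with
  | nil => rfl
  | cons x w ih => rw [List.foldl_cons, ih, leftQuotient_leftQuotient, List.singleton_append]

end LeftQuotient

lemma Pi.eq_of_single_apply_ne_zero {ι M : Type*} [DecidableEq ι] [Zero M] {i j : ι} {x : M}
    (h : (Pi.single i x : ι → M) j ≠ 0) : j = i := by
  by_contra hji
  exact h (by simp [hji])

section Deterministic

variable {X K : Type*} [Semiring K] {n : ℕ}

lemma wordProd_nil (μ : X → Matrix (Fin n) (Fin n) K) : wordProd μ [] = 1 := rfl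

lemma wordProd_cons (μ : X → Matrix (Fin n) (Fin n) K) (x : X) (w : List X) :
    wordProd μ (x :: w) = μ x * wordProd μ w := by
  simp [wordProd]

lemma wordProd_append (μ : X → Matrix (Fin n) (Fin n) K) (w w' : List X) :
    wordProd μ (w ++ w') = wordProd μ w * wordProd μ w' := by
  simp [wordProd]

def transitionMatrix (δ : Fin n → Fin n) : Matrix (Fin n) (Fin n) K :=
  .of fun p => Pi.single (δ p) 1

lemma single_one_vecMul_wordProd_transitionMatrix (δ : Fin n → X → Fin n) (q : Fin n)
    (w : List X) :
    Pi.single q 1 ᵥ* wordProd (fun x => transitionMatrix (δ · x)) w =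
      Pi.single (w.foldl δ q) (1 : K) := by
  induction w generalizing q with
  | nil => rw [wordProd_nil, vecMul_one, List.foldl_nil]
  | cons x w ih =>
    rw [wordProd_cons, ← vecMul_vecMul, single_one_vecMul, List.foldl_cons, ← ih]
    rfl

lemma isLinRep_transitionMatrix (δ : Fin n → X → Fin n) (q₀ : Fin n) (out : Fin n → K) :
    IsLinRep (fun w => out (w.foldl δ q₀)) (Pi.single q₀ 1)
      (fun x => transitionMatrix (δ · x)) out := by
  intro w
  rw [dotProduct_mulVec, single_one_vecMul_wordProd_transitionMatrix, single_one_dotProduct]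

lemma isDeterministic_transitionMatrix (δ : Fin n → X → Fin n) (q₀ : Fin n) :
    IsDeterministic (Pi.single q₀ (1 : K)) (fun x => transitionMatrix (δ · x)) :=
  ⟨fun _ _ hi hj => (Pi.eq_of_single_apply_ne_zero hi).trans
      (Pi.eq_of_single_apply_ne_zero hj).symm,
    fun _ _ _ _ hq hq' => (Pi.eq_of_single_apply_ne_zero hq).trans
      (Pi.eq_of_single_apply_ne_zero hq').symm⟩

theorem exists_deterministic_of_foldl {Q : Type*} [Finite Q] (δ : Q → X → Q) (q₀ : Q)
    (out : Q → K) :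
    ∃ (n : ℕ) (u : Fin n → K) (μ : X → Matrix (Fin n) (Fin n) K) (v : Fin n → K),
      IsLinRep (fun w => out (w.foldl δ q₀)) u μ v ∧ IsDeterministic u μ := by
  obtain ⟨n, ⟨e⟩⟩ := Finite.exists_equiv_fin Q
  let δ' : Fin n → X → Fin n := fun i x => e (δ (e.symm i) x)
  have hfoldl (w : List X) : w.foldl δ' (e q₀) = e (w.foldl δ q₀) :=
    List.foldl_hom e fun q x => by simp [δ']
  have hS : (fun w : List X => out (w.foldl δ q₀)) =
      fun w => (out ∘ e.symm) (w.foldl δ' (e q₀)) := by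
    funext w
    simp [hfoldl]
  rw [hS]
  exact ⟨n, _, _, _, isLinRep_transitionMatrix δ' (e q₀) _,
    isDeterministic_transitionMatrix δ' (e q₀)⟩

theorem exists_deterministic_of_finite_range_leftQuotient (S : List X → K)
    (hfin : (range (leftQuotient S)).Finite) :
    ∃ (n : ℕ) (u : Fin n → K) (μ : X → Matrix (Fin n) (Fin n) K) (v : Fin n → K),
      IsLinRep S u μ v ∧ IsDeterministic u μ := by
  have := hfin.to_subtype
  let δ : range (leftQuotient S) → X → range (leftQuotient S) := fun R x =>
    ⟨leftQuotient R.1 [x], by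
      obtain ⟨w, hw⟩ := R.2
      exact ⟨w ++ [x], by rw [← hw, leftQuotient_leftQuotient]⟩⟩
  let q₀ : range (leftQuotient S) := ⟨S, [], rfl⟩
  have hfoldl (w : List X) : (w.foldl δ q₀).1 = leftQuotient S w := by
    rw [← List.foldl_hom (g₂ := fun R x => leftQuotient R [x]) Subtype.val fun _ _ => rfl,
      foldl_leftQuotient]
  have hS : S = fun w => (w.foldl δ q₀).1 [] := by
    funext w
    simp [hfoldl]
  rw [hS]
  exact exists_deterministic_of_foldl δ q₀ (fun R => R.1 [])

end Deterministic

section Finiteness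

lemma exists_finset_span_image_eq {ι R M : Type*} [Semiring R] [AddCommMonoid M] [Module R M]
    (f : ι → M) (hf : (span R (range f)).FG) :
    ∃ Z : Finset ι, span R (f '' Z) = span R (range f) := by
  classical
  obtain ⟨T, hT, hspan⟩ := (fg_span_iff_fg_span_finset_subset _).1 hf
  rw [← image_univ] at hT
  obtain ⟨Z, -, rfl⟩ := Finset.subset_set_image_iff.1 hT
  exact ⟨Z, by rw [hspan, Finset.coe_image]⟩

variable {X K : Type*} [CommRing K] {n : ℕ} {S : List X → K} {u : Fin n → K}
  {μ : X → Matrix (Fin n) (Fin n) K} {v : Fin n → K}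

lemma IsLinRep.leftQuotient_apply_eq (hS : IsLinRep S u μ v) (w z : List X) :
    leftQuotient S w z = (u ᵥ* wordProd μ w) ⬝ᵥ (wordProd μ z *ᵥ v) := by
  rw [leftQuotient_apply, hS, wordProd_append, ← mulVec_mulVec, dotProduct_mulVec]

theorem IsLinRep.exists_finset_leftQuotient_eq_of_eqOn [IsNoetherianRing K]
    (hS : IsLinRep S u μ v) :
    ∃ Z : Finset (List X), ∀ w w' : List X,
      EqOn (leftQuotient S w) (leftQuotient S w') Z → leftQuotient S w = leftQuotient S w' := by
  let ρ : List X → Fin n → K := fun z => wordProd μ z *ᵥ v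
  obtain ⟨Z, hZ⟩ := exists_finset_span_image_eq (R := K) ρ (IsNoetherian.noetherian _)
  refine ⟨Z, fun w w' hww' => funext fun z => ?_⟩
  have hspan : EqOn (dotProductBilin K K (u ᵥ* wordProd μ w))
      (dotProductBilin K K (u ᵥ* wordProd μ w')) (span K (ρ '' Z)) := by
    refine LinearMap.eqOn_span' ?_
    rintro _ ⟨z, hz, rfl⟩
    have h := hww' hz
    rwa [hS.leftQuotient_apply_eq, hS.leftQuotient_apply_eq] at h
  have hz : ρ z ∈ span K (ρ '' Z) := hZ ▸ subset_span (mem_range_self z)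
  rw [hS.leftQuotient_apply_eq, hS.leftQuotient_apply_eq]
  exact hspan hz

theorem IsLinRep.finite_range_leftQuotient [IsNoetherianRing K] (hS : IsLinRep S u μ v)
    (hfin : (range S).Finite) : (range (leftQuotient S)).Finite := by
  obtain ⟨Z, hZ⟩ := hS.exists_finset_leftQuotient_eq_of_eqOn
  refine Finite.of_finite_image (f := domRestrict Z) ?_ ?_
  · refine (Finite.pi fun _ => hfin).subset ?_
    rintro _ ⟨_, ⟨w, rfl⟩, rfl⟩ z -
    exact ⟨w ++ z, rfl⟩
  · rintro _ ⟨w, rfl⟩ _ ⟨w', rfl⟩ h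
    exact hZ w w' fun z hz => congrFun h ⟨z, hz⟩

end Finiteness

theorem finite_values_deterministic_general {K X : Type*} [Field K]
    (S : List X → K) (hrat : IsRational S) (hfin : (Set.range S).Finite) :
    ∃ (n : ℕ) (u : Fin n → K) (μ : X → Matrix (Fin n) (Fin n) K) (v : Fin n → K),
      IsLinRep S u μ v ∧ IsDeterministic u μ := by
  obtain ⟨n, u, μ, v, hS⟩ := hrat
  exact exists_deterministic_of_finite_range_leftQuotient S (hS.finite_range_leftQuotient hfin)

/-- A rational series taking only finitely many values is recognized by a deterministic
weighted automaton. -/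
theorem finite_values_deterministic {K X : Type*} [Field K] [Fintype X] [Nonempty X]
    (S : List X → K) (hrat : IsRational S) (hfin : (Set.range S).Finite) :
    ∃ (n : ℕ) (u : Fin n → K) (μ : X → Matrix (Fin n) (Fin n) K) (v : Fin n → K),
      IsLinRep S u μ v ∧ IsDeterministic u μ :=
  finite_values_deterministic_general S hrat hfin
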